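/- For every ε > 0, the worst-case noise variance of the Piecewise Mechanism over inputs t ∈ [−1,1] equals 4e^{ε/2}/(3(e^{ε/2}−1)²); precisely, for all t ∈ [−1,1], σ²_P(t,ε) ≤ 4e^{ε/2}/(3(e^{ε/2}−1)²), with equality when |t| = 1. -/
import Mathlib

open Real

/-- noise variance of the Piecewise Mechanism on input `t` with privacy budget `ε`. -/
noncomputable def pmVar (t ε : ℝ) : ℝ :=
  t ^ 2 / (exp (ε / 2) - 1) + (exp (ε / 2) + 3) / (3 * (exp (ε / 2) - 1) ^ 2)

/-- The worst-case noise variance of the Piecewise Mechanism over `t ∈ [-1,1]` equals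
`4e^{ε/2}/(3(e^{ε/2}−1)²)`: it is an upper bound, attained whenever `|t| = 1`. -/
theorem stmt_3 (ε : ℝ) (hε : 0 < ε) :
    (∀ t ∈ Set.Icc (-1 : ℝ) 1,
        pmVar t ε ≤ 4 * exp (ε / 2) / (3 * (exp (ε / 2) - 1) ^ 2)) ∧
    (∀ t : ℝ, |t| = 1 →
        pmVar t ε = 4 * exp (ε / 2) / (3 * (exp (ε / 2) - 1) ^ 2)) := by
  have hx : 1 < exp (ε / 2) := by
    rw [← Real.exp_zero]
    exact Real.exp_lt_exp.2 (by linarith)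
  set x := exp (ε / 2) with hxdef
  have hx1 : 0 < x - 1 := by linarith
  constructor
  · intro t ht
    have ht2 : t ^ 2 ≤ 1 := by
      nlinarith [ht.1, ht.2]
    unfold pmVar
    rw [div_add_div _ _ (by positivity) (by positivity), div_le_div_iff₀ (by positivity) (by positivity),
      ← hxdef]
    nlinarith [mul_nonneg (mul_nonneg (sub_nonneg.2 ht2) (sq_nonneg (x-1))) (sq_nonneg (x-1)),
      mul_nonneg (sub_nonneg.2 ht2) (sq_nonneg (x-1)), hx1]
  · intro t ht
    have ht2 : t ^ 2 = 1 := by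
      have := sq_abs t
      rw [ht] at this; linarith [this]
    unfold pmVar
    rw [ht2, ← hxdef]
    field_simp
    ring
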